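/- None of the three Lie algebras E^1_{9,5}, E^2_{9,5}, E^3_{9,5} are pairwise isomorphic. -/
import Mathlib


open Finset

/-- The `k`-th standard basis vector of `ℂⁿ` (zero if `k ≥ n`). -/
noncomputable def E (n k : ℕ) : Fin n → ℂ := fun t => if (t : ℕ) = k then 1 else 0

/-- The bilinear bracket on `ℂⁿ` determined by structure constants `s`, antisymmetrized:
`[e_i, e_j] = s i j - s j i`. -/
noncomputable def brkt (n : ℕ) (s : ℕ → ℕ → Fin n → ℂ) (x y : Fin n → ℂ) : Fin n → ℂ :=
  ∑ i : Fin n, ∑ j : Fin n, (x i * y j) • (s (i : ℕ) (j : ℕ) - s (j : ℕ) (i : ℕ))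

/-- Structure constants common to `E¹_{9,5}`, `E²_{9,5}`, `E³_{9,5}`, with parameters
`p, q, r, s` giving the coefficients of `X₇` in `[X₁,X₆]`, `[X₂,X₅]`, `[X₂,X₈]`, `[X₃,X₄]`:
`E¹ = sE95 3 (-1) (-3) 0`, `E² = sE95 1 1 (-1) (-2)`, `E³ = sE95 0 2 0 (-3)`. -/
noncomputable def sE95 (p q r s : ℂ) : ℕ → ℕ → Fin 9 → ℂ := fun i j =>
  (if i = 0 ∧ 1 ≤ j ∧ j ≤ 6 then E 9 (j + 1) else 0) +
  (if i = 0 ∧ j = 8 then E 9 6 else 0) +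
  (if i = 1 ∧ j = 4 then E 9 8 else 0) +
  (if i = 1 ∧ j = 5 then (2 : ℂ) • E 9 6 else 0) +
  (if i = 2 ∧ j = 3 then -E 9 8 else 0) +
  (if i = 2 ∧ j = 4 then -E 9 6 else 0) +
  (if i = 1 ∧ j = 6 then p • E 9 7 else 0) +
  (if i = 2 ∧ j = 5 then q • E 9 7 else 0) +
  (if i = 2 ∧ j = 8 then r • E 9 7 else 0) +
  (if i = 3 ∧ j = 4 then s • E 9 7 else 0)

/-- Two bracket structures on `ℂ⁹` are isomorphic if a linear equivalence intertwines them. -/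
def IsoBrkt (s₁ s₂ : ℕ → ℕ → Fin 9 → ℂ) : Prop :=
  ∃ e : (Fin 9 → ℂ) ≃ₗ[ℂ] (Fin 9 → ℂ), ∀ x y, e (brkt 9 s₁ x y) = brkt 9 s₂ (e x) (e y)

set_option maxHeartbeats 2000000

namespace E95aux
open Module

lemma sum9 {M : Type*} [AddCommMonoid M] (f : Fin 9 → M) :
    ∑ i, f i = f 0 + f 1 + f 2 + f 3 + f 4 + f 5 + f 6 + f 7 + f 8 := by
  rw [Fin.sum_univ_castSucc, Fin.sum_univ_eight]; rfl

lemma brkt_apply (n : ℕ) (s : ℕ → ℕ → Fin n → ℂ) (x y : Fin n → ℂ) (k : Fin n) :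
    brkt n s x y k = ∑ i : Fin n, ∑ j : Fin n,
      (x i * y j) * (s (i : ℕ) (j : ℕ) k - s (j : ℕ) (i : ℕ) k) := by
  simp [brkt, smul_eq_mul]

lemma v0 : ((0:Fin 9):ℕ) = 0 := rfl
lemma v1 : ((1:Fin 9):ℕ) = 1 := rfl
lemma v2 : ((2:Fin 9):ℕ) = 2 := rfl
lemma v3 : ((3:Fin 9):ℕ) = 3 := rfl
lemma v4 : ((4:Fin 9):ℕ) = 4 := rfl
lemma v5 : ((5:Fin 9):ℕ) = 5 := rfl
lemma v6 : ((6:Fin 9):ℕ) = 6 := rfl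
lemma v7 : ((7:Fin 9):ℕ) = 7 := rfl
lemma v8 : ((8:Fin 9):ℕ) = 8 := rfl

section eval
variable (p q r s : ℂ) (x y : Fin 9 → ℂ)

lemma bk0 : brkt 9 (sE95 p q r s) x y 0 = 0 := by
  rw [brkt_apply]
  simp only [sum9, sE95, E, v0, v1, v2, v3, v4, v5, v6, v7, v8,
    Pi.add_apply, Pi.smul_apply, Pi.sub_apply, Pi.neg_apply, Pi.zero_apply, smul_eq_mul]
  norm_num
  try simp only [E, v0, v1, v2, v3, v4, v5, v6, v7, v8]
  try norm_num
  try ring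

lemma bk1 : brkt 9 (sE95 p q r s) x y 1 = 0 := by
  rw [brkt_apply]
  simp only [sum9, sE95, E, v0, v1, v2, v3, v4, v5, v6, v7, v8,
    Pi.add_apply, Pi.smul_apply, Pi.sub_apply, Pi.neg_apply, Pi.zero_apply, smul_eq_mul]
  norm_num
  try simp only [E, v0, v1, v2, v3, v4, v5, v6, v7, v8]
  try norm_num
  try ring

lemma bk2 : brkt 9 (sE95 p q r s) x y 2 = x 0 * y 1 - x 1 * y 0 := by
  rw [brkt_apply]
  simp only [sum9, sE95, E, v0, v1, v2, v3, v4, v5, v6, v7, v8,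
    Pi.add_apply, Pi.smul_apply, Pi.sub_apply, Pi.neg_apply, Pi.zero_apply, smul_eq_mul]
  norm_num
  try simp only [E, v0, v1, v2, v3, v4, v5, v6, v7, v8]
  try norm_num
  try ring

lemma bk3 : brkt 9 (sE95 p q r s) x y 3 = x 0 * y 2 - x 2 * y 0 := by
  rw [brkt_apply]
  simp only [sum9, sE95, E, v0, v1, v2, v3, v4, v5, v6, v7, v8,
    Pi.add_apply, Pi.smul_apply, Pi.sub_apply, Pi.neg_apply, Pi.zero_apply, smul_eq_mul]
  norm_num
  try simp only [E, v0, v1, v2, v3, v4, v5, v6, v7, v8]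
  try norm_num
  try ring

lemma bk4 : brkt 9 (sE95 p q r s) x y 4 = x 0 * y 3 - x 3 * y 0 := by
  rw [brkt_apply]
  simp only [sum9, sE95, E, v0, v1, v2, v3, v4, v5, v6, v7, v8,
    Pi.add_apply, Pi.smul_apply, Pi.sub_apply, Pi.neg_apply, Pi.zero_apply, smul_eq_mul]
  norm_num
  try simp only [E, v0, v1, v2, v3, v4, v5, v6, v7, v8]
  try norm_num
  try ring

lemma bk5 : brkt 9 (sE95 p q r s) x y 5 = x 0 * y 4 - x 4 * y 0 := by
  rw [brkt_apply]
  simp only [sum9, sE95, E, v0, v1, v2, v3, v4, v5, v6, v7, v8,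
    Pi.add_apply, Pi.smul_apply, Pi.sub_apply, Pi.neg_apply, Pi.zero_apply, smul_eq_mul]
  norm_num
  try simp only [E, v0, v1, v2, v3, v4, v5, v6, v7, v8]
  try norm_num
  try ring

lemma bk6 : brkt 9 (sE95 p q r s) x y 6 =
    (x 0 * y 5 - x 5 * y 0) + (x 0 * y 8 - x 8 * y 0)
      + 2*(x 1 * y 5 - x 5 * y 1) - (x 2 * y 4 - x 4 * y 2) := by
  rw [brkt_apply]
  simp only [sum9, sE95, E, v0, v1, v2, v3, v4, v5, v6, v7, v8,
    Pi.add_apply, Pi.smul_apply, Pi.sub_apply, Pi.neg_apply, Pi.zero_apply, smul_eq_mul]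
  norm_num
  try simp only [E, v0, v1, v2, v3, v4, v5, v6, v7, v8]
  try norm_num
  try ring

lemma bk7 : brkt 9 (sE95 p q r s) x y 7 =
    (x 0 * y 6 - x 6 * y 0) + p*(x 1 * y 6 - x 6 * y 1) + q*(x 2 * y 5 - x 5 * y 2)
      + r*(x 2 * y 8 - x 8 * y 2) + s*(x 3 * y 4 - x 4 * y 3) := by
  rw [brkt_apply]
  simp only [sum9, sE95, E, v0, v1, v2, v3, v4, v5, v6, v7, v8,
    Pi.add_apply, Pi.smul_apply, Pi.sub_apply, Pi.neg_apply, Pi.zero_apply, smul_eq_mul]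
  norm_num
  try simp only [E, v0, v1, v2, v3, v4, v5, v6, v7, v8]
  try norm_num
  try ring

lemma bk8 : brkt 9 (sE95 p q r s) x y 8 =
    (x 1 * y 4 - x 4 * y 1) - (x 2 * y 3 - x 3 * y 2) := by
  rw [brkt_apply]
  simp only [sum9, sE95, E, v0, v1, v2, v3, v4, v5, v6, v7, v8,
    Pi.add_apply, Pi.smul_apply, Pi.sub_apply, Pi.neg_apply, Pi.zero_apply, smul_eq_mul]
  norm_num
  try simp only [E, v0, v1, v2, v3, v4, v5, v6, v7, v8]
  try norm_num
  try ring

end eval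
end E95aux

namespace E95aux
lemma m0 (h : 0 < 9) : (⟨0, h⟩ : Fin 9) = 0 := rfl
lemma m1 (h : 1 < 9) : (⟨1, h⟩ : Fin 9) = 1 := rfl
lemma m2 (h : 2 < 9) : (⟨2, h⟩ : Fin 9) = 2 := rfl
lemma m3 (h : 3 < 9) : (⟨3, h⟩ : Fin 9) = 3 := rfl
lemma m4 (h : 4 < 9) : (⟨4, h⟩ : Fin 9) = 4 := rfl
lemma m5 (h : 5 < 9) : (⟨5, h⟩ : Fin 9) = 5 := rfl
lemma m6 (h : 6 < 9) : (⟨6, h⟩ : Fin 9) = 6 := rfl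
lemma m7 (h : 7 < 9) : (⟨7, h⟩ : Fin 9) = 7 := rfl
lemma m8 (h : 8 < 9) : (⟨8, h⟩ : Fin 9) = 8 := rfl
end E95aux

namespace E95aux
open Module

lemma brkt_zero_left (n : ℕ) (s : ℕ → ℕ → Fin n → ℂ) (y : Fin n → ℂ) :
    brkt n s 0 y = 0 := by
  simp [brkt]

lemma brkt_add_left (n : ℕ) (s : ℕ → ℕ → Fin n → ℂ) (x x' y : Fin n → ℂ) :
    brkt n s (x + x') y = brkt n s x y + brkt n s x' y := by
  simp [brkt, add_mul, add_smul, Finset.sum_add_distrib]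

lemma brkt_smul_left (n : ℕ) (s : ℕ → ℕ → Fin n → ℂ) (c : ℂ) (x y : Fin n → ℂ) :
    brkt n s (c • x) y = c • brkt n s x y := by
  simp only [brkt, Pi.smul_apply, smul_eq_mul, Finset.smul_sum, smul_smul, mul_assoc]

/-- centralizer of `[g,[g,g]]` -/
noncomputable def CC3 (c : ℕ → ℕ → Fin 9 → ℂ) : Submodule ℂ (Fin 9 → ℂ) where
  carrier := {x | ∀ y z w, brkt 9 c x (brkt 9 c y (brkt 9 c z w)) = 0}
  zero_mem' := fun y z w => brkt_zero_left 9 c _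
  add_mem' := by
    intro a b ha hb y z w
    rw [brkt_add_left, ha y z w, hb y z w, add_zero]
  smul_mem' := by
    intro t a ha y z w
    rw [brkt_smul_left, ha y z w, smul_zero]

lemma mem_CC3 (c : ℕ → ℕ → Fin 9 → ℂ) (x : Fin 9 → ℂ) :
    x ∈ CC3 c ↔ ∀ y z w, brkt 9 c x (brkt 9 c y (brkt 9 c z w)) = 0 := Iff.rfl

/-- `{x : [x, [g,g]] ⊆ centralizer of [g,g]}` -/
noncomputable def TT (c : ℕ → ℕ → Fin 9 → ℂ) : Submodule ℂ (Fin 9 → ℂ) where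
  carrier := {x | ∀ y z u v, brkt 9 c (brkt 9 c x (brkt 9 c y z)) (brkt 9 c u v) = 0}
  zero_mem' := by
    intro y z u v
    rw [brkt_zero_left, brkt_zero_left]
  add_mem' := by
    intro a b ha hb y z u v
    rw [brkt_add_left, brkt_add_left, ha y z u v, hb y z u v, add_zero]
  smul_mem' := by
    intro t a ha y z u v
    rw [brkt_smul_left, brkt_smul_left, ha y z u v, smul_zero]

lemma mem_TT (c : ℕ → ℕ → Fin 9 → ℂ) (x : Fin 9 → ℂ) :
    x ∈ TT c ↔ ∀ y z u v, brkt 9 c (brkt 9 c x (brkt 9 c y z)) (brkt 9 c u v) = 0 := Iff.rfl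

lemma CC3_map {c₁ c₂ : ℕ → ℕ → Fin 9 → ℂ} (e : (Fin 9 → ℂ) ≃ₗ[ℂ] (Fin 9 → ℂ))
    (he : ∀ x y, e (brkt 9 c₁ x y) = brkt 9 c₂ (e x) (e y)) :
    (CC3 c₁).map (e : (Fin 9 → ℂ) →ₗ[ℂ] (Fin 9 → ℂ)) = CC3 c₂ := by
  ext v
  rw [Submodule.mem_map_equiv, mem_CC3, mem_CC3]
  constructor
  · intro h1 y z w
    have h3 : e (brkt 9 c₁ (e.symm v) (brkt 9 c₁ (e.symm y) (brkt 9 c₁ (e.symm z) (e.symm w)))) = 0 := by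
      rw [h1 (e.symm y) (e.symm z) (e.symm w), map_zero]
    rw [he, he, he, e.apply_symm_apply, e.apply_symm_apply, e.apply_symm_apply,
      e.apply_symm_apply] at h3
    exact h3
  · intro h1 y z w
    have h3 : e (brkt 9 c₁ (e.symm v) (brkt 9 c₁ y (brkt 9 c₁ z w))) = 0 := by
      rw [he, he, he, e.apply_symm_apply]
      exact h1 _ _ _
    simpa using h3

lemma TT_map {c₁ c₂ : ℕ → ℕ → Fin 9 → ℂ} (e : (Fin 9 → ℂ) ≃ₗ[ℂ] (Fin 9 → ℂ))
    (he : ∀ x y, e (brkt 9 c₁ x y) = brkt 9 c₂ (e x) (e y)) :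
    (TT c₁).map (e : (Fin 9 → ℂ) →ₗ[ℂ] (Fin 9 → ℂ)) = TT c₂ := by
  ext x
  rw [Submodule.mem_map_equiv, mem_TT, mem_TT]
  constructor
  · intro h1 y z u v
    have h3 : e (brkt 9 c₁ (brkt 9 c₁ (e.symm x) (brkt 9 c₁ (e.symm y) (e.symm z)))
        (brkt 9 c₁ (e.symm u) (e.symm v))) = 0 := by
      rw [h1 (e.symm y) (e.symm z) (e.symm u) (e.symm v), map_zero]
    rw [he, he, he, he, e.apply_symm_apply, e.apply_symm_apply, e.apply_symm_apply,
      e.apply_symm_apply, e.apply_symm_apply] at h3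
    exact h3
  · intro h1 y z u v
    have h3 : e (brkt 9 c₁ (brkt 9 c₁ (e.symm x) (brkt 9 c₁ y z)) (brkt 9 c₁ u v)) = 0 := by
      rw [he, he, he, he, e.apply_symm_apply]
      exact h1 _ _ _ _
    simpa using h3

lemma finrank_CC3_eq {c₁ c₂ : ℕ → ℕ → Fin 9 → ℂ} (h : IsoBrkt c₁ c₂) :
    finrank ℂ (CC3 c₁) = finrank ℂ (CC3 c₂) := by
  obtain ⟨e, he⟩ := h
  rw [← CC3_map e he, LinearEquiv.finrank_map_eq]

lemma finrank_TT_eq {c₁ c₂ : ℕ → ℕ → Fin 9 → ℂ} (h : IsoBrkt c₁ c₂) :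
    finrank ℂ (TT c₁) = finrank ℂ (TT c₂) := by
  obtain ⟨e, he⟩ := h
  rw [← TT_map e he, LinearEquiv.finrank_map_eq]

/-- projection onto the first `m` coordinates -/
def projL (m : ℕ) (h : m ≤ 9) : (Fin 9 → ℂ) →ₗ[ℂ] (Fin m → ℂ) :=
  LinearMap.funLeft ℂ ℂ (Fin.castLE h)

lemma finrank_ker_projL (m : ℕ) (h : m ≤ 9) :
    finrank ℂ (LinearMap.ker (projL m h)) = 9 - m := by
  have hs : Function.Surjective (projL m h) :=
    LinearMap.funLeft_surjective_of_injective _ _ _ (Fin.strictMono_castLE h).injective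
  have h1 := LinearMap.finrank_range_add_finrank_ker (projL m h)
  rw [LinearMap.range_eq_top.mpr hs, finrank_top, Module.finrank_fin_fun,
    Module.finrank_fin_fun] at h1
  omega

lemma mem_ker_projL (m : ℕ) (h : m ≤ 9) (x : Fin 9 → ℂ) :
    x ∈ LinearMap.ker (projL m h) ↔ ∀ i : Fin m, x (Fin.castLE h i) = 0 := by
  simp [projL, LinearMap.mem_ker, funext_iff, LinearMap.funLeft_apply]

end E95aux

namespace E95aux
open Module

lemma CC3_E1 : CC3 (sE95 3 (-1) (-3) 0) = LinearMap.ker (projL 3 (by norm_num)) := by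
  ext x
  rw [mem_CC3, mem_ker_projL]
  constructor
  · intro hx
    have h := hx (E 9 0) (E 9 0) (E 9 2)
    have h5 := congrFun h 5
    have h8 := congrFun h 8
    have h6 := congrFun h 6
    simp only [bk0, bk1, bk2, bk3, bk4, bk5, bk6, bk7, bk8, Pi.zero_apply] at h5 h8 h6
    simp only [E, v0, v1, v2, v3, v4, v5, v6, v7, v8] at h5 h8 h6
    norm_num at h5 h8 h6
    intro i
    fin_cases i
    · exact h5
    · exact h8
    · exact h6
  · intro hx
    have hx0 : x 0 = 0 := hx ⟨0, by norm_num⟩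
    have hx1 : x 1 = 0 := hx ⟨1, by norm_num⟩
    have hx2 : x 2 = 0 := hx ⟨2, by norm_num⟩
    intro y z w
    have key : ∀ u : Fin 9 → ℂ, u 0 = 0 → u 1 = 0 → u 2 = 0 →
        brkt 9 (sE95 3 (-1) (-3) 0) x u = 0 := by
      intro u h0 h1 h2
      funext k
      fin_cases k <;>
        · simp only [m0, m1, m2, m3, m4, m5, m6, m7, m8,
            bk0, bk1, bk2, bk3, bk4, bk5, bk6, bk7, bk8, Pi.zero_apply,
            hx0, hx1, hx2, h0, h1, h2]
          try ring
    exact key _ (bk0 _ _ _ _ _ _) (bk1 _ _ _ _ _ _) (by rw [bk2, bk0, bk1]; ring)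

end E95aux

namespace E95aux
open Module

lemma CC3_E2 : CC3 (sE95 1 1 (-1) (-2)) = LinearMap.ker (projL 5 (by norm_num)) := by
  ext x
  rw [mem_CC3, mem_ker_projL]
  constructor
  · intro hx
    have hA := hx (E 9 0) (E 9 0) (E 9 2)
    have hB := hx (E 9 0) (E 9 0) (E 9 1)
    have h5 := congrFun hA 5
    have h8 := congrFun hA 8
    have h6 := congrFun hA 6
    have h7 := congrFun hA 7
    have g7 := congrFun hB 7
    simp only [bk0, bk1, bk2, bk3, bk4, bk5, bk6, bk7, bk8, Pi.zero_apply] at h5 h8 h6 h7 g7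
    simp only [E, v0, v1, v2, v3, v4, v5, v6, v7, v8] at h5 h8 h6 h7 g7
    norm_num at h5 h8 h6 h7 g7
    intro i
    fin_cases i
    · exact h5
    · exact h8
    · exact h6
    · exact h7
    · exact g7
  · intro hx
    have hx0 : x 0 = 0 := hx ⟨0, by norm_num⟩
    have hx1 : x 1 = 0 := hx ⟨1, by norm_num⟩
    have hx2 : x 2 = 0 := hx ⟨2, by norm_num⟩
    have hx3 : x 3 = 0 := hx ⟨3, by norm_num⟩
    have hx4 : x 4 = 0 := hx ⟨4, by norm_num⟩
    intro y z w
    have key : ∀ u : Fin 9 → ℂ, u 0 = 0 → u 1 = 0 → u 2 = 0 →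
        brkt 9 (sE95 1 1 (-1) (-2)) x u = 0 := by
      intro u h0 h1 h2
      funext k
      fin_cases k <;>
        · simp only [m0, m1, m2, m3, m4, m5, m6, m7, m8,
            bk0, bk1, bk2, bk3, bk4, bk5, bk6, bk7, bk8, Pi.zero_apply,
            hx0, hx1, hx2, hx3, hx4, h0, h1, h2]
          try ring
    exact key _ (bk0 _ _ _ _ _ _) (bk1 _ _ _ _ _ _) (by rw [bk2, bk0, bk1]; ring)

lemma CC3_E3 : CC3 (sE95 0 2 0 (-3)) = LinearMap.ker (projL 5 (by norm_num)) := by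
  ext x
  rw [mem_CC3, mem_ker_projL]
  constructor
  · intro hx
    have hA := hx (E 9 0) (E 9 0) (E 9 2)
    have hB := hx (E 9 0) (E 9 0) (E 9 1)
    have h5 := congrFun hA 5
    have h8 := congrFun hA 8
    have h6 := congrFun hA 6
    have h7 := congrFun hA 7
    have g7 := congrFun hB 7
    simp only [bk0, bk1, bk2, bk3, bk4, bk5, bk6, bk7, bk8, Pi.zero_apply] at h5 h8 h6 h7 g7
    simp only [E, v0, v1, v2, v3, v4, v5, v6, v7, v8] at h5 h8 h6 h7 g7
    norm_num at h5 h8 h6 h7 g7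
    intro i
    fin_cases i
    · exact h5
    · exact h8
    · exact h6
    · exact h7
    · exact g7
  · intro hx
    have hx0 : x 0 = 0 := hx ⟨0, by norm_num⟩
    have hx1 : x 1 = 0 := hx ⟨1, by norm_num⟩
    have hx2 : x 2 = 0 := hx ⟨2, by norm_num⟩
    have hx3 : x 3 = 0 := hx ⟨3, by norm_num⟩
    have hx4 : x 4 = 0 := hx ⟨4, by norm_num⟩
    intro y z w
    have key : ∀ u : Fin 9 → ℂ, u 0 = 0 → u 1 = 0 → u 2 = 0 →
        brkt 9 (sE95 0 2 0 (-3)) x u = 0 := by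
      intro u h0 h1 h2
      funext k
      fin_cases k <;>
        · simp only [m0, m1, m2, m3, m4, m5, m6, m7, m8,
            bk0, bk1, bk2, bk3, bk4, bk5, bk6, bk7, bk8, Pi.zero_apply,
            hx0, hx1, hx2, hx3, hx4, h0, h1, h2]
          try ring
    exact key _ (bk0 _ _ _ _ _ _) (bk1 _ _ _ _ _ _) (by rw [bk2, bk0, bk1]; ring)

lemma TT_E2 : TT (sE95 1 1 (-1) (-2)) = LinearMap.ker (projL 4 (by norm_num)) := by
  ext x
  rw [mem_TT, mem_ker_projL]
  constructor
  · intro hx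
    have hA := hx (E 9 0) (E 9 1) (E 9 0) (E 9 1)
    have hB := hx (E 9 0) (E 9 2) (E 9 0) (E 9 1)
    have hC := hx (E 9 0) (E 9 3) (E 9 0) (E 9 1)
    have a8 := congrFun hA 8
    have a7 := congrFun hA 7
    have b7 := congrFun hB 7
    have c7 := congrFun hC 7
    simp only [bk0, bk1, bk2, bk3, bk4, bk5, bk6, bk7, bk8, Pi.zero_apply] at a8 a7 b7 c7
    simp only [E, v0, v1, v2, v3, v4, v5, v6, v7, v8] at a8 a7 b7 c7
    norm_num at a8 a7 b7 c7
    intro i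
    fin_cases i
    · exact a8
    · exact (by linear_combination c7 + a8 : x 1 = 0)
    · exact b7
    · exact a7
  · intro hx
    have hx0 : x 0 = 0 := hx ⟨0, by norm_num⟩
    have hx1 : x 1 = 0 := hx ⟨1, by norm_num⟩
    have hx2 : x 2 = 0 := hx ⟨2, by norm_num⟩
    have hx3 : x 3 = 0 := hx ⟨3, by norm_num⟩
    intro y z u v
    have key : ∀ w t : Fin 9 → ℂ, w 0 = 0 → w 1 = 0 → w 2 = 0 → w 3 = 0 → w 4 = 0 →
        w 5 = 0 → w 8 = 0 → t 0 = 0 → t 1 = 0 →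
        brkt 9 (sE95 1 1 (-1) (-2)) w t = 0 := by
      intro w t k0 k1 k2 k3 k4 k5 k8 l0 l1
      funext k
      fin_cases k <;>
        · simp only [m0, m1, m2, m3, m4, m5, m6, m7, m8,
            bk0, bk1, bk2, bk3, bk4, bk5, bk6, bk7, bk8, Pi.zero_apply,
            k0, k1, k2, k3, k4, k5, k8, l0, l1]
          try ring
    refine key _ _ (bk0 _ _ _ _ _ _) (bk1 _ _ _ _ _ _) ?_ ?_ ?_ ?_ ?_
      (bk0 _ _ _ _ _ _) (bk1 _ _ _ _ _ _)
    · rw [bk2, bk0, bk1]; ring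
    · rw [bk3, bk0]; rw [hx0, hx2]; ring
    · rw [bk4, bk0]; rw [hx0, hx3]; ring
    · rw [bk5, bk0]; rw [hx0]; ring
    · rw [bk8, bk1]; rw [hx1, hx2, hx3]; ring

lemma TT_E3 : TT (sE95 0 2 0 (-3)) = LinearMap.ker (projL 1 (by norm_num)) := by
  ext x
  rw [mem_TT, mem_ker_projL]
  constructor
  · intro hx
    have hA := hx (E 9 0) (E 9 1) (E 9 0) (E 9 3)
    have a7 := congrFun hA 7
    simp only [bk0, bk1, bk2, bk3, bk4, bk5, bk6, bk7, bk8, Pi.zero_apply] at a7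
    simp only [E, v0, v1, v2, v3, v4, v5, v6, v7, v8] at a7
    norm_num at a7
    intro i
    fin_cases i
    · exact a7
  · intro hx
    have hx0 : x 0 = 0 := hx ⟨0, by norm_num⟩
    intro y z u v
    have key : ∀ w t : Fin 9 → ℂ, w 0 = 0 → w 1 = 0 → w 2 = 0 → w 3 = 0 → w 4 = 0 →
        w 5 = 0 → t 0 = 0 → t 1 = 0 →
        brkt 9 (sE95 0 2 0 (-3)) w t = 0 := by
      intro w t k0 k1 k2 k3 k4 k5 l0 l1
      funext k
      fin_cases k <;>
        · simp only [m0, m1, m2, m3, m4, m5, m6, m7, m8,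
            bk0, bk1, bk2, bk3, bk4, bk5, bk6, bk7, bk8, Pi.zero_apply,
            k0, k1, k2, k3, k4, k5, l0, l1]
          try ring
    refine key _ _ (bk0 _ _ _ _ _ _) (bk1 _ _ _ _ _ _) ?_ ?_ ?_ ?_
      (bk0 _ _ _ _ _ _) (bk1 _ _ _ _ _ _)
    · rw [bk2, bk0, bk1]; rw [hx0]; ring
    · rw [bk3, bk0]; rw [hx0]; ring
    · rw [bk4, bk0]; rw [hx0]; ring
    · rw [bk5, bk0]; rw [hx0]; ring

lemma dim_CC3_E1 : finrank ℂ (CC3 (sE95 3 (-1) (-3) 0)) = 6 := by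
  rw [CC3_E1, finrank_ker_projL]

lemma dim_CC3_E2 : finrank ℂ (CC3 (sE95 1 1 (-1) (-2))) = 4 := by
  rw [CC3_E2, finrank_ker_projL]

lemma dim_CC3_E3 : finrank ℂ (CC3 (sE95 0 2 0 (-3))) = 4 := by
  rw [CC3_E3, finrank_ker_projL]

lemma dim_TT_E2 : finrank ℂ (TT (sE95 1 1 (-1) (-2))) = 5 := by
  rw [TT_E2, finrank_ker_projL]

lemma dim_TT_E3 : finrank ℂ (TT (sE95 0 2 0 (-3))) = 8 := by
  rw [TT_E3, finrank_ker_projL]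

end E95aux


/-- the Lie algebras `E¹_{9,5}`, `E²_{9,5}`, `E³_{9,5}` are pairwise
non-isomorphic. -/
theorem stmt_15 :
    ¬ IsoBrkt (sE95 3 (-1) (-3) 0) (sE95 1 1 (-1) (-2)) ∧
    ¬ IsoBrkt (sE95 3 (-1) (-3) 0) (sE95 0 2 0 (-3)) ∧
    ¬ IsoBrkt (sE95 1 1 (-1) (-2)) (sE95 0 2 0 (-3)) := by
  refine ⟨fun h => ?_, fun h => ?_, fun h => ?_⟩
  · have := E95aux.finrank_CC3_eq h
    rw [E95aux.dim_CC3_E1, E95aux.dim_CC3_E2] at this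
    norm_num at this
  · have := E95aux.finrank_CC3_eq h
    rw [E95aux.dim_CC3_E1, E95aux.dim_CC3_E3] at this
    norm_num at this
  · have := E95aux.finrank_TT_eq h
    rw [E95aux.dim_TT_E2, E95aux.dim_TT_E3] at this
    norm_num at this
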